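/- arXiv:2003.12330 — 6 statements merged into one kernel-verified Lean document; each statement's English description precedes it below -/
import Mathlib

section
/- Let P and A be real n×n matrices with P symmetric, suppose (1/2)(P·A + Aᵀ·P) ⪯ −I, and let L₂ > 0, ε ∈ (0,1). Let x, w ∈ ℝⁿ satisfy ‖w − Ax‖ ≤ L₂‖x‖² and ‖x‖ ≤ (1 − ε)/(L₂‖P‖). Then xᵀ P w ≤ −ε‖x‖². -/
open Matrix

/-- The ℓ² operator norm of a real matrix, i.e. the norm of the induced
continuous linear map on Euclidean space. -/
noncomputable def opNorm {n : ℕ} (P : Matrix (Fin n) (Fin n) ℝ) : ℝ :=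
  ‖Matrix.toEuclideanCLM (𝕜 := ℝ) P‖

/-- The bilinear pairing `xᵀ P w` on Euclidean space. -/
noncomputable def quadF {n : ℕ} (P : Matrix (Fin n) (Fin n) ℝ)
    (x w : EuclideanSpace ℝ (Fin n)) : ℝ :=
  inner ℝ x (Matrix.toEuclideanLin P w)

/-! Write `w = A x + (w - A x)`. For symmetric `P` the two halves of the LMI agree on the diagonal,
`xᵀ Aᵀ P x = xᵀ P A x`, so it says exactly `xᵀ P A x ≤ -‖x‖²`. The remainder contributes at most
`‖P‖ ‖x‖ · L₂ ‖x‖²`, and the radius bound makes this at most `(1 - ε) ‖x‖²`. -/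

namespace Matrix

variable {ι : Type*} [Fintype ι] [DecidableEq ι]

theorem inner_toEuclideanLin_transpose (A : Matrix ι ι ℝ) (x y : EuclideanSpace ℝ ι) :
    inner ℝ x (toEuclideanLin Aᵀ y) = inner ℝ (toEuclideanLin A x) y := by
  rw [← conjTranspose_eq_transpose_of_trivial, toEuclideanLin_conjTranspose_eq_adjoint,
    LinearMap.adjoint_inner_right]

theorem IsSymm.inner_toEuclideanLin_comm {P : Matrix ι ι ℝ} (hP : P.IsSymm)
    (x y : EuclideanSpace ℝ ι) :
    inner ℝ x (toEuclideanLin P y) = inner ℝ (toEuclideanLin P x) y := by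
  rw [← inner_toEuclideanLin_transpose, hP.eq]

theorem inner_toEuclideanLin_mul_self_le_neg_norm_sq {P A : Matrix ι ι ℝ} (hP : P.IsSymm)
    (hLMI : (-(1 : Matrix ι ι ℝ) - (1 / 2 : ℝ) • (P * A + Aᵀ * P)).PosSemidef)
    (x : EuclideanSpace ℝ ι) :
    inner ℝ x (toEuclideanLin (P * A) x) ≤ -‖x‖ ^ 2 := by
  have hpos := (isPositive_toEuclideanLin_iff.mpr hLMI).inner_nonneg_right x
  have hsymm : inner ℝ x (toEuclideanLin (Aᵀ * P) x) = inner ℝ x (toEuclideanLin (P * A) x) := by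
    simp only [toLpLin_mul_same, LinearMap.comp_apply]
    rw [inner_toEuclideanLin_transpose, real_inner_comm, hP.inner_toEuclideanLin_comm]
  simp only [map_sub, map_neg, map_smul, map_add, toLpLin_one, LinearMap.sub_apply,
    LinearMap.neg_apply, LinearMap.smul_apply, LinearMap.add_apply, LinearMap.id_apply,
    inner_sub_right, inner_neg_right, inner_smul_right, inner_add_right,
    real_inner_self_eq_norm_sq, hsymm] at hpos
  linarith

theorem inner_toEuclideanLin_le_opNorm_mul (P : Matrix ι ι ℝ) (x y : EuclideanSpace ℝ ι) :
    inner ℝ x (toEuclideanLin P y) ≤ ‖toEuclideanCLM (𝕜 := ℝ) P‖ * ‖x‖ * ‖y‖ :=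
  calc inner ℝ x (toEuclideanLin P y)
      ≤ ‖x‖ * ‖toEuclideanCLM (𝕜 := ℝ) P y‖ := real_inner_le_norm _ _
    _ ≤ ‖x‖ * (‖toEuclideanCLM (𝕜 := ℝ) P‖ * ‖y‖) := by
        gcongr
        exact ContinuousLinearMap.le_opNorm _ _
    _ = _ := by ring

end Matrix

theorem near_origin_estimate_general {n : ℕ} (P A : Matrix (Fin n) (Fin n) ℝ)
    (hP : P.IsSymm)
    (hLMI : (-(1 : Matrix (Fin n) (Fin n) ℝ)
      - (1 / 2 : ℝ) • (P * A + Aᵀ * P)).PosSemidef)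
    (L₂ ε : ℝ) (hL₂ : 0 < L₂) (hε1 : ε < 1)
    (x w : EuclideanSpace ℝ (Fin n))
    (hw : ‖w - Matrix.toEuclideanLin A x‖ ≤ L₂ * ‖x‖ ^ 2)
    (hx : ‖x‖ ≤ (1 - ε) / (L₂ * opNorm P)) :
    quadF P x w ≤ -ε * ‖x‖ ^ 2 := by
  have hsmall : ‖x‖ * (L₂ * opNorm P) ≤ 1 - ε :=
    mul_le_of_le_div₀ (by linarith) (mul_nonneg hL₂.le (norm_nonneg _)) hx
  have hsplit : quadF P x w = inner ℝ x (toEuclideanLin (P * A) x)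
      + inner ℝ x (toEuclideanLin P (w - toEuclideanLin A x)) := by
    simp only [quadF, toLpLin_mul_same, LinearMap.comp_apply, map_sub, inner_sub_right]
    ring
  calc quadF P x w
      ≤ -‖x‖ ^ 2 + opNorm P * ‖x‖ * (L₂ * ‖x‖ ^ 2) := by
        rw [hsplit]
        gcongr
        · exact inner_toEuclideanLin_mul_self_le_neg_norm_sq hP hLMI x
        · exact (inner_toEuclideanLin_le_opNorm_mul P x _).trans
            (mul_le_mul_of_nonneg_left hw (mul_nonneg (norm_nonneg _) (norm_nonneg x)))
    _ = -‖x‖ ^ 2 + ‖x‖ * (L₂ * opNorm P) * ‖x‖ ^ 2 := by ring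
    _ ≤ -‖x‖ ^ 2 + (1 - ε) * ‖x‖ ^ 2 := by gcongr
    _ = -ε * ‖x‖ ^ 2 := by ring

/-- near-origin estimate, linearized form.
Let `P, A` be real `n × n` matrices with `P` symmetric and
`(1/2)(P A + Aᵀ P) ⪯ -I`, and let `L₂ > 0`, `ε ∈ (0,1)`. If `x, w ∈ ℝⁿ` satisfy
`‖w - A x‖ ≤ L₂ ‖x‖²` and `‖x‖ ≤ (1-ε)/(L₂ ‖P‖)`, then `xᵀ P w ≤ -ε ‖x‖²`. -/
theorem near_origin_estimate {n : ℕ} (P A : Matrix (Fin n) (Fin n) ℝ)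
    (hP : P.IsSymm)
    (hLMI : (-(1 : Matrix (Fin n) (Fin n) ℝ)
      - (1 / 2 : ℝ) • (P * A + Aᵀ * P)).PosSemidef)
    (L₂ ε : ℝ) (hL₂ : 0 < L₂) (hε0 : 0 < ε) (hε1 : ε < 1)
    (x w : EuclideanSpace ℝ (Fin n))
    (hw : ‖w - Matrix.toEuclideanLin A x‖ ≤ L₂ * ‖x‖ ^ 2)
    (hx : ‖x‖ ≤ (1 - ε) / (L₂ * opNorm P)) :
    quadF P x w ≤ -ε * ‖x‖ ^ 2 :=
  near_origin_estimate_general P A hP hLMI L₂ ε hL₂ hε1 x w hw hx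
end

section
/- Let Ω ⊆ ℝⁿ be a convex set containing 0, let f : Ω → ℝⁿ satisfy f(0) = 0 and ‖f(u) − f(v)‖ ≤ L₁‖u − v‖ for all u, v ∈ Ω (with L₁ ≥ 0), and let P be a symmetric real n×n matrix. Let z ∈ Ω with z ≠ 0 satisfy zᵀ P f(z) ≤ −‖z‖², and let a ∈ ℝⁿ be such that z + a ∈ Ω and ‖a‖ < α‖z‖ for some α > 0. Then (z + a)ᵀ P f(z + a) < −‖z‖² (1 − 2‖P‖L₁α − ‖P‖L₁α²). -/
/-!
Split `(z + a)ᵀ P f(z + a) = zᵀ P f(z) + zᵀ P (f(z + a) - f(z)) + aᵀ P f(z + a)` and bound the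
last two terms by Cauchy–Schwarz and the Lipschitz bounds `‖f(z + a) - f(z)‖ ≤ L₁ ‖a‖`,
`‖f(z + a)‖ ≤ L₁ (‖z‖ + ‖a‖)`, giving an error of at most `‖P‖ L₁ ‖a‖ (2‖z‖ + ‖a‖)`.
The inequality is strict because `‖P‖ L₁ > 0`: Cauchy–Schwarz gives
`-‖z‖² ≥ zᵀ P f(z) ≥ -‖P‖ L₁ ‖z‖²`, so even `‖P‖ L₁ ≥ 1`.
-/

section

variable {n : ℕ} (P : Matrix (Fin n) (Fin n) ℝ)

theorem opNorm_nonneg : 0 ≤ opNorm P := norm_nonneg _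

theorem norm_toEuclideanLin_apply_le (w : EuclideanSpace ℝ (Fin n)) :
    ‖Matrix.toEuclideanLin P w‖ ≤ opNorm P * ‖w‖ := by
  simpa [opNorm, ← Matrix.coe_toEuclideanCLM_eq_toEuclideanLin] using
    (Matrix.toEuclideanCLM (𝕜 := ℝ) P).le_opNorm w

theorem abs_quadF_le (x w : EuclideanSpace ℝ (Fin n)) :
    |quadF P x w| ≤ opNorm P * ‖x‖ * ‖w‖ :=
  calc |quadF P x w| ≤ ‖x‖ * ‖Matrix.toEuclideanLin P w‖ := abs_real_inner_le_norm _ _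
    _ ≤ ‖x‖ * (opNorm P * ‖w‖) := by gcongr; exact norm_toEuclideanLin_apply_le P w
    _ = opNorm P * ‖x‖ * ‖w‖ := by ring

theorem quadF_le (x w : EuclideanSpace ℝ (Fin n)) :
    quadF P x w ≤ opNorm P * ‖x‖ * ‖w‖ :=
  (le_abs_self _).trans (abs_quadF_le P x w)

theorem quadF_add_left (x y w : EuclideanSpace ℝ (Fin n)) :
    quadF P (x + y) w = quadF P x w + quadF P y w :=
  inner_add_left _ _ _

theorem quadF_sub_right (x v w : EuclideanSpace ℝ (Fin n)) :
    quadF P x (w - v) = quadF P x w - quadF P x v := by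
  simp only [quadF, map_sub, inner_sub_right]

theorem quadF_add_le (x a v w : EuclideanSpace ℝ (Fin n)) :
    quadF P (x + a) w ≤ quadF P x v + opNorm P * (‖x‖ * ‖w - v‖ + ‖a‖ * ‖w‖) := by
  have hsplit : quadF P (x + a) w = quadF P x v + quadF P x (w - v) + quadF P a w := by
    rw [quadF_add_left, quadF_sub_right]; ring
  have hx := quadF_le P x (w - v)
  have ha := quadF_le P a w
  linarith

theorem one_le_opNorm_mul_of_quadF_le_neg_sq {x w : EuclideanSpace ℝ (Fin n)} {L : ℝ}
    (hx : x ≠ 0) (hxw : quadF P x w ≤ -‖x‖ ^ 2) (hw : ‖w‖ ≤ L * ‖x‖) :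
    1 ≤ opNorm P * L := by
  have hx_pos : 0 < ‖x‖ ^ 2 := by positivity
  have hlower : -(opNorm P * L * ‖x‖ ^ 2) ≤ quadF P x w :=
    calc -(opNorm P * L * ‖x‖ ^ 2) = -(opNorm P * ‖x‖ * (L * ‖x‖)) := by ring
      _ ≤ -(opNorm P * ‖x‖ * ‖w‖) := by gcongr; exact mul_nonneg (opNorm_nonneg P) (norm_nonneg x)
      _ ≤ quadF P x w := neg_le_of_abs_le (abs_quadF_le P x w)
  nlinarith

end

theorem away_from_origin_key_estimate_general {n : ℕ}
    (Ω : Set (EuclideanSpace ℝ (Fin n)))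
    (h0 : (0 : EuclideanSpace ℝ (Fin n)) ∈ Ω)
    (f : EuclideanSpace ℝ (Fin n) → EuclideanSpace ℝ (Fin n))
    (hf0 : f 0 = 0)
    (L₁ : ℝ)
    (hlip : ∀ u ∈ Ω, ∀ v ∈ Ω, ‖f u - f v‖ ≤ L₁ * ‖u - v‖)
    (P : Matrix (Fin n) (Fin n) ℝ)
    (z : EuclideanSpace ℝ (Fin n)) (hz : z ∈ Ω) (hz0 : z ≠ 0)
    (hzP : quadF P z (f z) ≤ -‖z‖ ^ 2)
    (a : EuclideanSpace ℝ (Fin n)) (hza : z + a ∈ Ω)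
    (α : ℝ) (ha : ‖a‖ < α * ‖z‖) :
    quadF P (z + a) (f (z + a))
      < -‖z‖ ^ 2 * (1 - 2 * opNorm P * L₁ * α - opNorm P * L₁ * α ^ 2) := by
  have hfz : ‖f z‖ ≤ L₁ * ‖z‖ := by simpa [hf0] using hlip z hz 0 h0
  have hK : 0 < opNorm P * L₁ :=
    one_pos.trans_le (one_le_opNorm_mul_of_quadF_le_neg_sq P hz0 hzP hfz)
  have hP_nonneg := opNorm_nonneg P
  have hL : 0 ≤ L₁ := (pos_of_mul_pos_right hK hP_nonneg).le
  have hstep : ‖f (z + a) - f z‖ ≤ L₁ * ‖a‖ := by simpa using hlip _ hza z hz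
  have hfza : ‖f (z + a)‖ ≤ L₁ * (‖z‖ + ‖a‖) :=
    calc ‖f (z + a)‖ ≤ L₁ * ‖z + a‖ := by simpa [hf0] using hlip _ hza 0 h0
      _ ≤ L₁ * (‖z‖ + ‖a‖) := by gcongr; exact norm_add_le z a
  calc quadF P (z + a) (f (z + a))
      ≤ quadF P z (f z) + opNorm P * (‖z‖ * ‖f (z + a) - f z‖ + ‖a‖ * ‖f (z + a)‖) :=
        quadF_add_le P z a (f z) (f (z + a))
    _ ≤ -‖z‖ ^ 2 + opNorm P * (‖z‖ * (L₁ * ‖a‖) + ‖a‖ * (L₁ * (‖z‖ + ‖a‖))) := by gcongr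
    _ = -‖z‖ ^ 2 + opNorm P * L₁ * ‖a‖ * (2 * ‖z‖ + ‖a‖) := by ring
    _ < -‖z‖ ^ 2 + opNorm P * L₁ * (α * ‖z‖) * (2 * ‖z‖ + α * ‖z‖) := by gcongr
    _ = -‖z‖ ^ 2 * (1 - 2 * opNorm P * L₁ * α - opNorm P * L₁ * α ^ 2) := by ring

/-- away-from-origin key estimate.
Let `Ω ⊆ ℝⁿ` be convex with `0 ∈ Ω`, let `f : Ω → ℝⁿ` satisfy `f 0 = 0` and be
`L₁`-Lipschitz on `Ω` (`L₁ ≥ 0`), and let `P` be symmetric. If `z ∈ Ω`, `z ≠ 0`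
satisfies `zᵀ P f(z) ≤ -‖z‖²`, and `a` is such that `z + a ∈ Ω` and
`‖a‖ < α ‖z‖` for some `α > 0`, then
`(z+a)ᵀ P f(z+a) < -‖z‖² (1 - 2‖P‖ L₁ α - ‖P‖ L₁ α²)`. -/
theorem away_from_origin_key_estimate {n : ℕ}
    (Ω : Set (EuclideanSpace ℝ (Fin n)))
    (hconv : Convex ℝ Ω) (h0 : (0 : EuclideanSpace ℝ (Fin n)) ∈ Ω)
    (f : EuclideanSpace ℝ (Fin n) → EuclideanSpace ℝ (Fin n))
    (hf0 : f 0 = 0)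
    (L₁ : ℝ) (hL₁ : 0 ≤ L₁)
    (hlip : ∀ u ∈ Ω, ∀ v ∈ Ω, ‖f u - f v‖ ≤ L₁ * ‖u - v‖)
    (P : Matrix (Fin n) (Fin n) ℝ) (hP : P.IsSymm)
    (z : EuclideanSpace ℝ (Fin n)) (hz : z ∈ Ω) (hz0 : z ≠ 0)
    (hzP : quadF P z (f z) ≤ -‖z‖ ^ 2)
    (a : EuclideanSpace ℝ (Fin n)) (hza : z + a ∈ Ω)
    (α : ℝ) (hα : 0 < α) (ha : ‖a‖ < α * ‖z‖) :
    quadF P (z + a) (f (z + a))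
      < -‖z‖ ^ 2 * (1 - 2 * opNorm P * L₁ * α - opNorm P * L₁ * α ^ 2) :=
  away_from_origin_key_estimate_general Ω h0 f hf0 L₁ hlip P z hz hz0 hzP a hza α ha
end

section
/- Let f : ℝⁿ → ℝⁿ be differentiable at 0 with f(0) = 0, let P be a symmetric real n×n matrix, let ε > 0, and suppose there is a neighborhood N of 0 such that xᵀ P f(x) ≤ −ε‖x‖² for all x ∈ N. Then (1/2)(P·Df(0) + Df(0)ᵀ·P) ⪯ −εI. -/
/-! Along a ray `t ↦ t • x`, the function `φ t = ⟪x, P f(t x)⟫` vanishes at `0` and satisfies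
`t φ(t) ≤ -ε t² ‖x‖²` for small `t > 0`, so its derivative `⟪x, P Df(0) x⟫` at `0` is at most
`-ε ‖x‖²`. For symmetric `P` this is the quadratic form of `½ (P Df(0) + Df(0)ᵀ P)`. -/

open Matrix

/-- The Jacobian matrix `Df(0)` of `f` at the origin:
`(Df(0))_{ij} = ∂f_i/∂x_j (0)`. -/
noncomputable def jacobianAtZero {n : ℕ}
    (f : EuclideanSpace ℝ (Fin n) → EuclideanSpace ℝ (Fin n)) :
    Matrix (Fin n) (Fin n) ℝ :=
  Matrix.of (fun i j => fderiv ℝ f 0 (EuclideanSpace.single j 1) i)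

open Filter Topology
open scoped RealInnerProductSpace

theorem HasDerivAt.le_of_eventually_le_mul {φ : ℝ → ℝ} {φ' c : ℝ} (hφ : HasDerivAt φ φ' 0)
    (hφ0 : φ 0 = 0) (hle : ∀ᶠ t in 𝓝[>] 0, φ t ≤ c * t) : φ' ≤ c := by
  refine le_of_tendsto hφ.tendsto_slope_zero_right ?_
  filter_upwards [hle, self_mem_nhdsWithin] with t ht (htpos : 0 < t)
  rw [zero_add, hφ0, sub_zero, smul_eq_mul, inv_mul_le_iff₀ htpos, mul_comm]
  exact ht

theorem HasFDerivAt.inner_apply_le_of_eventually_inner_le {E : Type*} [NormedAddCommGroup E]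
    [InnerProductSpace ℝ E] {g : E → E} {g' : E →L[ℝ] E} (hg : HasFDerivAt g g' 0)
    (hg0 : g 0 = 0) {c : ℝ} (hloc : ∀ᶠ x in 𝓝 0, ⟪x, g x⟫ ≤ c * ‖x‖ ^ 2) (x : E) :
    ⟪x, g' x⟫ ≤ c * ‖x‖ ^ 2 := by
  have hray : Tendsto (fun t : ℝ => t • x) (𝓝[>] 0) (𝓝 0) :=
    (Continuous.tendsto' (by fun_prop) 0 0 (zero_smul ℝ x)).mono_left nhdsWithin_le_nhds
  have hderiv : HasDerivAt (fun t : ℝ => ⟪x, g (t • x)⟫) (⟪x, g' x⟫) 0 := by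
    have hline : HasDerivAt (fun t : ℝ => t • x) x 0 := by
      simpa using (hasDerivAt_id (0 : ℝ)).smul_const x
    have hg' : HasFDerivAt g g' ((0 : ℝ) • x) := by rwa [zero_smul]
    exact ((innerSL ℝ x).hasFDerivAt.comp_hasDerivAt 0 (hg'.comp_hasDerivAt 0 hline))
  refine hderiv.le_of_eventually_le_mul (by simp [hg0]) ?_
  filter_upwards [hray.eventually hloc, self_mem_nhdsWithin] with t ht (htpos : 0 < t)
  rw [real_inner_smul_left, norm_smul, Real.norm_of_nonneg htpos.le] at ht
  nlinarith

theorem posSemidef_smul_one_sub_symmPart_of_dotProduct_le {ι : Type*} [Fintype ι] [DecidableEq ι]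
    {P A : Matrix ι ι ℝ} (hP : P.IsSymm) {c : ℝ}
    (h : ∀ y, y ⬝ᵥ P *ᵥ A *ᵥ y ≤ c * (y ⬝ᵥ y)) :
    (c • 1 - (1 / 2 : ℝ) • (P * A + Aᵀ * P)).PosSemidef := by
  have hswap : ∀ y, y ⬝ᵥ Aᵀ *ᵥ P *ᵥ y = y ⬝ᵥ P *ᵥ A *ᵥ y := fun y => by
    rw [dotProduct_mulVec, vecMul_transpose, dotProduct_mulVec, ← mulVec_transpose, hP.eq,
      dotProduct_comm]
  rw [posSemidef_iff_dotProduct_mulVec]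
  refine ⟨?_, fun y => ?_⟩
  · simp [IsHermitian, transpose_mul, hP.eq, add_comm]
  · have := h y
    simp only [star_trivial, sub_mulVec, add_mulVec, smul_mulVec, one_mulVec, dotProduct_sub,
      dotProduct_smul, dotProduct_add, ← mulVec_mulVec, hswap, smul_eq_mul]
    linarith

theorem toEuclideanCLM_jacobianAtZero {n : ℕ}
    (f : EuclideanSpace ℝ (Fin n) → EuclideanSpace ℝ (Fin n)) :
    toEuclideanCLM (𝕜 := ℝ) (jacobianAtZero f) = fderiv ℝ f 0 := by
  refine ContinuousLinearMap.coe_injective ?_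
  rw [coe_toEuclideanCLM_eq_toEuclideanLin, toEuclideanLin_eq_toLin_orthonormal,
    ← LinearMap.toMatrix_symm, LinearEquiv.symm_apply_eq]
  ext i j
  simp [LinearMap.toMatrix_apply, jacobianAtZero]

theorem lmi_from_local_decrease_general {n : ℕ}
    (f : EuclideanSpace ℝ (Fin n) → EuclideanSpace ℝ (Fin n))
    (hdiff : DifferentiableAt ℝ f 0) (hf0 : f 0 = 0)
    (P : Matrix (Fin n) (Fin n) ℝ) (hP : P.IsSymm)
    (ε : ℝ)
    (N : Set (EuclideanSpace ℝ (Fin n)))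
    (hN : N ∈ nhds (0 : EuclideanSpace ℝ (Fin n)))
    (hloc : ∀ x ∈ N, quadF P x (f x) ≤ -ε * ‖x‖ ^ 2) :
    ((-ε) • (1 : Matrix (Fin n) (Fin n) ℝ)
      - (1 / 2 : ℝ) • (P * jacobianAtZero f + (jacobianAtZero f)ᵀ * P)).PosSemidef := by
  have hPf : HasFDerivAt (fun x => toEuclideanCLM (𝕜 := ℝ) P (f x))
      (toEuclideanCLM (𝕜 := ℝ) P ∘L toEuclideanCLM (𝕜 := ℝ) (jacobianAtZero f)) 0 := by
    rw [toEuclideanCLM_jacobianAtZero]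
    exact (toEuclideanCLM (𝕜 := ℝ) P).hasFDerivAt.comp 0 hdiff.hasFDerivAt
  have hlin := hPf.inner_apply_le_of_eventually_inner_le (by simp [hf0])
    (eventually_of_mem hN hloc)
  refine posSemidef_smul_one_sub_symmPart_of_dotProduct_le hP fun y => ?_
  have hy := hlin (WithLp.toLp 2 y)
  rw [ContinuousLinearMap.comp_apply, toEuclideanCLM_toLp, toEuclideanCLM_toLp,
    ← real_inner_self_eq_norm_sq, EuclideanSpace.inner_toLp_toLp,
    EuclideanSpace.inner_toLp_toLp, star_trivial] at hy
  rw [dotProduct_comm]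
  exact hy

/-- local Lyapunov decrease implies the linearized LMI.
Let `f : ℝⁿ → ℝⁿ` be differentiable at `0` with `f 0 = 0`, `P` symmetric,
`ε > 0`, and suppose `xᵀ P f(x) ≤ -ε ‖x‖²` for all `x` in some neighborhood `N`
of `0`. Then `(1/2)(P·Df(0) + Df(0)ᵀ·P) ⪯ -ε I`. -/
theorem lmi_from_local_decrease {n : ℕ}
    (f : EuclideanSpace ℝ (Fin n) → EuclideanSpace ℝ (Fin n))
    (hdiff : DifferentiableAt ℝ f 0) (hf0 : f 0 = 0)
    (P : Matrix (Fin n) (Fin n) ℝ) (hP : P.IsSymm)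
    (ε : ℝ) (hε : 0 < ε)
    (N : Set (EuclideanSpace ℝ (Fin n)))
    (hN : N ∈ nhds (0 : EuclideanSpace ℝ (Fin n)))
    (hloc : ∀ x ∈ N, quadF P x (f x) ≤ -ε * ‖x‖ ^ 2) :
    ((-ε) • (1 : Matrix (Fin n) (Fin n) ℝ)
      - (1 / 2 : ℝ) • (P * jacobianAtZero f + (jacobianAtZero f)ᵀ * P)).PosSemidef :=
  lmi_from_local_decrease_general f hdiff hf0 P hP ε N hN hloc
end

section
/- Let Ω ⊆ ℝⁿ be a set with 0 in its interior, let f : ℝⁿ → ℝⁿ be differentiable at 0 with f(0) = 0, let P be a symmetric real n×n matrix with P ⪰ I, and let ε ∈ (0,1] be such that xᵀ P f(x) ≤ −ε‖x‖² for all x ∈ Ω. Then the scaled matrix P' := ε⁻¹ P satisfies: (i) zᵀ P' f(z) ≤ −‖z‖² for all z ∈ Ω; (ii) (1/2)(P'·Df(0) + Df(0)ᵀ·P') ⪯ −I; and (iii) P' ⪰ I. -/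
open Matrix

/-!
Part (i) is the hypothesis divided by `ε`, and part (iii) holds because
`ε⁻¹ P - I = ε⁻¹ (P - I) + (ε⁻¹ - 1) I` with `ε⁻¹ ≥ 1`. For part (ii), differentiate the
Lyapunov inequality along rays: for `t ≠ 0` small,
`vᵀ P (t⁻¹ f(t v)) = t⁻² (t v)ᵀ P f(t v) ≤ -ε ‖v‖²`, and `t⁻¹ f(t v) → Df(0) v`, so
`vᵀ P Df(0) v ≤ -ε ‖v‖²`; this quadratic form only sees the symmetric part of `P Df(0)`.
-/

open Filter Topology

theorem inner_apply_le_of_hasFDerivAt_of_eventually_inner_le {E : Type*}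
    [NormedAddCommGroup E] [InnerProductSpace ℝ E] {g : E → E} {A : E →L[ℝ] E}
    (hg : HasFDerivAt g A 0) (hg0 : g 0 = 0) {c : ℝ}
    (h : ∀ᶠ x in 𝓝 0, inner ℝ x (g x) ≤ c * ‖x‖ ^ 2) (v : E) :
    inner ℝ v (A v) ≤ c * ‖v‖ ^ 2 := by
  have hray : Tendsto (fun t : ℝ => t⁻¹ • g (t • v)) (𝓝[≠] 0) (𝓝 (A v)) := by
    simpa [hg0] using hg.lim v tendsto_norm_inv_nhdsNE_zero_atTop
  have hlim := (tendsto_const_nhds (x := v)).inner (𝕜 := ℝ) hray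
  have hnear : ∀ᶠ t in 𝓝[≠] (0 : ℝ), inner ℝ (t • v) (g (t • v)) ≤ c * ‖t • v‖ ^ 2 := by
    refine nhdsWithin_le_nhds (Tendsto.eventually ?_ h)
    simpa using (tendsto_id (x := 𝓝 (0 : ℝ))).smul_const v
  refine le_of_tendsto hlim ?_
  filter_upwards [hnear, self_mem_nhdsWithin] with t ht (ht0 : t ≠ 0)
  rw [real_inner_smul_left, norm_smul, Real.norm_eq_abs, mul_pow, sq_abs] at ht
  have ht2 : 0 < t ^ 2 := by positivity
  calc inner ℝ v (t⁻¹ • g (t • v)) = (t ^ 2)⁻¹ * (t * inner ℝ v (g (t • v))) := by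
        rw [real_inner_smul_right]; field_simp
    _ ≤ (t ^ 2)⁻¹ * (c * (t ^ 2 * ‖v‖ ^ 2)) := by gcongr
    _ = c * ‖v‖ ^ 2 := by field_simp

theorem posSemidef_sub_half_smul_add_transpose {ι : Type*} [Fintype ι]
    {S M : Matrix ι ι ℝ} (hS : S.IsSymm) (h : ∀ x, x ⬝ᵥ M *ᵥ x ≤ x ⬝ᵥ S *ᵥ x) :
    (S - (1 / 2 : ℝ) • (M + Mᵀ)).PosSemidef := by
  refine .of_dotProduct_mulVec_nonneg ?_ fun x => ?_
  · exact isHermitian_iff_isSymm.mpr (hS.sub ((isSymm_add_transpose_self M).smul _))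
  · have hMt : x ⬝ᵥ Mᵀ *ᵥ x = x ⬝ᵥ M *ᵥ x := by
      rw [mulVec_transpose, dotProduct_comm, dotProduct_mulVec]
    simp only [star_trivial, sub_mulVec, smul_mulVec, add_mulVec, dotProduct_sub,
      dotProduct_smul, dotProduct_add, hMt, smul_eq_mul]
    linarith [h x]

theorem posSemidef_smul_sub_one {ι : Type*} [Fintype ι] [DecidableEq ι] {P : Matrix ι ι ℝ}
    (hP : (P - 1).PosSemidef) {c : ℝ} (hc : 1 ≤ c) : (c • P - 1).PosSemidef := by
  have hsplit : c • P - 1 = c • (P - 1) + (c - 1) • (1 : Matrix ι ι ℝ) := by module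
  rw [hsplit]
  exact (hP.smul (by linarith)).add (PosSemidef.one.smul (by linarith))

section quadF

variable {n : ℕ}

theorem quadF_eq_dotProduct (P : Matrix (Fin n) (Fin n) ℝ) (x w : EuclideanSpace ℝ (Fin n)) :
    quadF P x w = x.ofLp ⬝ᵥ P *ᵥ w.ofLp := by
  rw [quadF, EuclideanSpace.inner_eq_star_dotProduct, toLpLin_apply, dotProduct_comm]
  rfl

theorem quadF_smul (c : ℝ) (P : Matrix (Fin n) (Fin n) ℝ) (x w : EuclideanSpace ℝ (Fin n)) :
    quadF (c • P) x w = c * quadF P x w := by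
  simp only [quadF_eq_dotProduct, smul_mulVec, dotProduct_smul, smul_eq_mul]

theorem quadF_mul (A B : Matrix (Fin n) (Fin n) ℝ) (x w : EuclideanSpace ℝ (Fin n)) :
    quadF (A * B) x w = quadF A x (toEuclideanLin B w) := by
  simp only [quadF_eq_dotProduct, ← mulVec_mulVec, ofLp_toLpLin, toLin'_apply]

theorem quadF_inv_smul_le {P : Matrix (Fin n) (Fin n) ℝ} {x w : EuclideanSpace ℝ (Fin n)}
    {ε : ℝ} (hε : 0 < ε) (h : quadF P x w ≤ -ε * ‖x‖ ^ 2) :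
    quadF (ε⁻¹ • P) x w ≤ -‖x‖ ^ 2 := by
  rw [quadF_smul, inv_mul_le_iff₀ hε]
  linarith

theorem toEuclideanLin_jacobianAtZero (f : EuclideanSpace ℝ (Fin n) → EuclideanSpace ℝ (Fin n)) :
    toEuclideanLin (jacobianAtZero f) = (fderiv ℝ f 0).toLinearMap := by
  refine (EuclideanSpace.basisFun (Fin n) ℝ).toBasis.ext fun j => ?_
  ext i
  simp [toLpLin_apply, jacobianAtZero, EuclideanSpace.basisFun_apply]

theorem quadF_jacobianAtZero_le {f : EuclideanSpace ℝ (Fin n) → EuclideanSpace ℝ (Fin n)}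
    (hf : DifferentiableAt ℝ f 0) (hf0 : f 0 = 0) (P : Matrix (Fin n) (Fin n) ℝ) {c : ℝ}
    (h : ∀ᶠ x in 𝓝 0, quadF P x (f x) ≤ c * ‖x‖ ^ 2) (v : EuclideanSpace ℝ (Fin n)) :
    quadF P v (toEuclideanLin (jacobianAtZero f) v) ≤ c * ‖v‖ ^ 2 := by
  have hPf := (toEuclideanCLM (𝕜 := ℝ) P).hasFDerivAt.comp 0 hf.hasFDerivAt
  rw [toEuclideanLin_jacobianAtZero]
  exact inner_apply_le_of_hasFDerivAt_of_eventually_inner_le hPf (by simp [hf0]) h v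

theorem posSemidef_neg_one_sub_half_smul_add_transpose {M : Matrix (Fin n) (Fin n) ℝ}
    (h : ∀ v, quadF M v v ≤ -‖v‖ ^ 2) :
    (-1 - (1 / 2 : ℝ) • (M + Mᵀ)).PosSemidef := by
  refine posSemidef_sub_half_smul_add_transpose isSymm_one.neg fun x => ?_
  have hx := h (WithLp.toLp 2 x)
  rw [quadF_eq_dotProduct, EuclideanSpace.real_norm_sq_eq] at hx
  rw [neg_mulVec, one_mulVec, dotProduct_neg]
  simpa [dotProduct, sq] using hx

end quadF

theorem scaled_certificate_general {n : ℕ}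
    (Ω : Set (EuclideanSpace ℝ (Fin n)))
    (h0 : (0 : EuclideanSpace ℝ (Fin n)) ∈ interior Ω)
    (f : EuclideanSpace ℝ (Fin n) → EuclideanSpace ℝ (Fin n))
    (hdiff : DifferentiableAt ℝ f 0) (hf0 : f 0 = 0)
    (P : Matrix (Fin n) (Fin n) ℝ)
    (hPI : (P - 1).PosSemidef)
    (ε : ℝ) (hε0 : 0 < ε) (hε1 : ε ≤ 1)
    (hlyap : ∀ x ∈ Ω, quadF P x (f x) ≤ -ε * ‖x‖ ^ 2) :
    (∀ z ∈ Ω, quadF (ε⁻¹ • P) z (f z) ≤ -‖z‖ ^ 2) ∧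
    ((-(1 : Matrix (Fin n) (Fin n) ℝ)
      - (1 / 2 : ℝ) • ((ε⁻¹ • P) * jacobianAtZero f
        + (jacobianAtZero f)ᵀ * (ε⁻¹ • P))).PosSemidef) ∧
    ((ε⁻¹ • P) - 1).PosSemidef := by
  refine ⟨fun z hz => quadF_inv_smul_le hε0 (hlyap z hz), ?_,
    posSemidef_smul_sub_one hPI ((one_le_inv₀ hε0).mpr hε1)⟩
  have hP : P.IsSymm := by
    simpa using isHermitian_iff_isSymm.mp (hPI.isHermitian.add isHermitian_one)
  have hJP : (jacobianAtZero f)ᵀ * (ε⁻¹ • P) = (ε⁻¹ • P * jacobianAtZero f)ᵀ := by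
    rw [transpose_mul, (hP.smul ε⁻¹).eq]
  have hnear : ∀ᶠ x in 𝓝 0, quadF P x (f x) ≤ -ε * ‖x‖ ^ 2 :=
    eventually_of_mem (mem_interior_iff_mem_nhds.mp h0) hlyap
  rw [hJP]
  refine posSemidef_neg_one_sub_half_smul_add_transpose fun v => ?_
  rw [quadF_mul]
  exact quadF_inv_smul_le hε0 (quadF_jacobianAtZero_le hdiff hf0 P hnear v)

/-- converse direction of the grid-sufficiency theorem.
Let `Ω ⊆ ℝⁿ` have `0` in its interior, `f : ℝⁿ → ℝⁿ` differentiable at `0`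
with `f 0 = 0`, `P` symmetric with `P ⪰ I`, and `ε ∈ (0,1]` such that
`xᵀ P f(x) ≤ -ε ‖x‖²` on `Ω`. Then `P' := ε⁻¹ P` satisfies
(i) `zᵀ P' f(z) ≤ -‖z‖²` on `Ω`;
(ii) `(1/2)(P'·Df(0) + Df(0)ᵀ·P') ⪯ -I`;
(iii) `P' ⪰ I`. -/
theorem scaled_certificate {n : ℕ}
    (Ω : Set (EuclideanSpace ℝ (Fin n)))
    (h0 : (0 : EuclideanSpace ℝ (Fin n)) ∈ interior Ω)
    (f : EuclideanSpace ℝ (Fin n) → EuclideanSpace ℝ (Fin n))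
    (hdiff : DifferentiableAt ℝ f 0) (hf0 : f 0 = 0)
    (P : Matrix (Fin n) (Fin n) ℝ) (hP : P.IsSymm)
    (hPI : (P - 1).PosSemidef)
    (ε : ℝ) (hε0 : 0 < ε) (hε1 : ε ≤ 1)
    (hlyap : ∀ x ∈ Ω, quadF P x (f x) ≤ -ε * ‖x‖ ^ 2) :
    (∀ z ∈ Ω, quadF (ε⁻¹ • P) z (f z) ≤ -‖z‖ ^ 2) ∧
    ((-(1 : Matrix (Fin n) (Fin n) ℝ)
      - (1 / 2 : ℝ) • ((ε⁻¹ • P) * jacobianAtZero f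
        + (jacobianAtZero f)ᵀ * (ε⁻¹ • P))).PosSemidef) ∧
    ((ε⁻¹ • P) - 1).PosSemidef :=
  scaled_certificate_general Ω h0 f hdiff hf0 P hPI ε hε0 hε1 hlyap
end

section
/- Let H be a real Hilbert space, let v₁, …, v_k ∈ H, and let T : H → ℝ^k be the continuous linear map T(g) := (⟨g, v₁⟩, …, ⟨g, v_k⟩). Let C ⊆ ℝ^k be a closed convex set such that the feasible set F := {g ∈ H : T(g) ∈ C} is nonempty, let ℓ : ℝ^k → ℝ be a continuous convex function, and let λ > 0. Then the optimization problem min_{g ∈ F} ℓ(T(g)) + λ‖g‖²_H has a unique solution g*, and g* lies in the finite-dimensional subspace span{v₁, …, v_k}. -/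
open scoped RealInnerProductSpace

/-!
Orthogonal projection onto `V = span {vᵢ}` leaves every `⟪g, vᵢ⟫` unchanged and does not increase
`‖g‖`, so a minimiser over the feasible points of the finite-dimensional space `V` is a minimiser
over all feasible points. On `V` the objective is continuous and coercive (a convex function
decreases at most linearly, while `λ‖g‖²` grows quadratically), so such a minimiser exists by
compactness of sublevel sets. The objective is `2λ`-strongly convex and the feasible set is convex,
which gives uniqueness.
-/

open Filter Metric Set Bornology

theorem ConvexOn.neg_mul_norm_add_one_le {E : Type*} [NormedAddCommGroup E] [NormedSpace ℝ E]
    {f : E → ℝ} (hf : ConvexOn ℝ univ f) {m : ℝ}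
    (hm : ∀ y ∈ closedBall (0 : E) 1, m ≤ f y) (y : E) :
    -((|m| + |f 0|) * (‖y‖ + 1)) ≤ f y := by
  have hm_abs := neg_abs_le m
  have hf0_abs := le_abs_self (f 0)
  rcases le_or_gt ‖y‖ 1 with hy | hy
  · have := hm y (mem_closedBall_zero_iff.2 hy)
    nlinarith [abs_nonneg m, abs_nonneg (f 0), norm_nonneg y]
  · set t := ‖y‖⁻¹
    have ht : 0 < t := inv_pos.2 (by linarith)
    have hty : ‖y‖ * t = 1 := mul_inv_cancel₀ (by linarith)
    have hball : t • y ∈ closedBall (0 : E) 1 := by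
      rw [mem_closedBall_zero_iff, norm_smul, Real.norm_of_nonneg ht.le, mul_comm, hty]
    have hsegment : f (t • y) ≤ (1 - t) * f 0 + t * f y := by
      simpa using hf.2 (mem_univ 0) (mem_univ y) (by linarith [inv_le_one_of_one_le₀ hy.le])
        ht.le (by ring)
    -- rescale `m ≤ f (t • y)` by `‖y‖ = t⁻¹`
    have key : ‖y‖ * m ≤ (‖y‖ - 1) * f 0 + f y := by
      have := mul_le_mul_of_nonneg_left ((hm _ hball).trans hsegment) (norm_nonneg y)
      linear_combination this + (f y - f 0) * hty
    nlinarith [abs_nonneg m, abs_nonneg (f 0)]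

theorem ConvexOn.tendsto_comp_add_mul_norm_sq_cobounded {E H : Type*} [NormedAddCommGroup E]
    [NormedSpace ℝ E] [FiniteDimensional ℝ E] [SeminormedAddCommGroup H] [NormedSpace ℝ H]
    {l : E → ℝ} (hl : ConvexOn ℝ univ l) (hlc : Continuous l) (T : H →L[ℝ] E) {lam : ℝ}
    (hlam : 0 < lam) :
    Tendsto (fun g => l (T g) + lam * ‖g‖ ^ 2) (cobounded H) atTop := by
  obtain ⟨m, hm⟩ := (isCompact_closedBall (0 : E) 1).bddBelow_image hlc.continuousOn
  set c := |m| + |l 0|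
  have hc : 0 ≤ c := by positivity
  have hlow : ∀ g, ‖g‖ * (lam * ‖g‖ - c * ‖T‖) - c ≤ l (T g) + lam * ‖g‖ ^ 2 := fun g => by
    have hlT := hl.neg_mul_norm_add_one_le (fun y hy => hm ⟨y, hy, rfl⟩) (T g)
    nlinarith [T.le_opNorm g]
  have hquad : Tendsto (fun r => r * (lam * r - c * ‖T‖) - c) atTop atTop :=
    tendsto_atTop_add_const_right _ _ <| tendsto_id.atTop_mul_atTop₀ <|
      tendsto_atTop_add_const_right _ _ <| tendsto_id.const_mul_atTop hlam
  exact tendsto_atTop_mono hlow (hquad.comp tendsto_norm_cobounded_atTop)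

theorem exists_mem_submodule_isMinOn_of_tendsto_cobounded {H : Type*} [NormedAddCommGroup H]
    [NormedSpace ℝ H] {J : H → ℝ} (hJ : Continuous J) (hJco : Tendsto J (cobounded H) atTop)
    {S : Set H} (hS : IsClosed S) (hne : S.Nonempty) (V : Submodule ℝ H) [FiniteDimensional ℝ V]
    (P : H → H) (hPV : ∀ g, P g ∈ V) (hPS : ∀ g ∈ S, P g ∈ S) (hPJ : ∀ g ∈ S, J (P g) ≤ J g) :
    ∃ x ∈ S, x ∈ V ∧ IsMinOn J S x := by
  obtain ⟨g₀, hg₀⟩ := hne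
  have hcocompact : Tendsto (fun x : V => J x) (cocompact V) atTop := by
    rw [← cobounded_eq_cocompact]
    exact hJco.comp (tendsto_norm_atTop_iff_cobounded.1 tendsto_norm_cobounded_atTop)
  obtain ⟨x, hxS, hxmin⟩ := (hJ.comp continuous_subtype_val).continuousOn.exists_isMinOn'
    (hS.preimage continuous_subtype_val) (x₀ := ⟨P g₀, hPV g₀⟩) (hPS g₀ hg₀)
    ((hcocompact.eventually (eventually_ge_atTop _)).filter_mono inf_le_left)
  exact ⟨x, hxS, x.2, fun g hg => (isMinOn_iff.1 hxmin ⟨P g, hPV g⟩ (hPS g hg)).trans (hPJ g hg)⟩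

section InnerProduct

variable {H : Type*} [NormedAddCommGroup H] [InnerProductSpace ℝ H]

theorem ConvexOn.strictConvexOn_comp_add_mul_norm_sq {E : Type*} [AddCommGroup E] [Module ℝ E]
    {l : E → ℝ} (hl : ConvexOn ℝ univ l) (T : H →ₗ[ℝ] E) {lam : ℝ} (hlam : 0 < lam) :
    StrictConvexOn ℝ univ (fun g => l (T g) + lam * ‖g‖ ^ 2) := by
  have : StrongConvexOn univ (2 * lam) (fun g => l (T g) + lam * ‖g‖ ^ 2) := by
    rw [strongConvexOn_iff_convex]
    have hlT := hl.comp_linearMap T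
    rw [preimage_univ] at hlT
    convert hlT using 1
    funext g
    simp only [Function.comp_apply]
    ring
  exact this.strictConvexOn (by positivity)

variable {ι : Type*}

noncomputable def innerMap (v : ι → H) : H →L[ℝ] (ι → ℝ) :=
  ContinuousLinearMap.pi fun i => (innerSL ℝ).flip (v i)

theorem innerMap_apply (v : ι → H) (g : H) : innerMap v g = fun i => ⟪g, v i⟫ := rfl

theorem innerMap_starProjection {v : ι → H} {K : Submodule ℝ H} [K.HasOrthogonalProjection]
    (hv : ∀ i, v i ∈ K) (g : H) : innerMap v (K.starProjection g) = innerMap v g := by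
  ext i
  simp only [innerMap_apply]
  rw [K.inner_starProjection_left_eq_right, K.starProjection_eq_self_iff.2 (hv i)]

end InnerProduct

theorem representer_theorem_general {H : Type*} [NormedAddCommGroup H]
    [InnerProductSpace ℝ H]
    {k : ℕ} (v : Fin k → H)
    (C : Set (Fin k → ℝ)) (hCcl : IsClosed C) (hCconv : Convex ℝ C)
    (l : (Fin k → ℝ) → ℝ) (hlcont : Continuous l)
    (hlconv : ConvexOn ℝ Set.univ l)
    (lam : ℝ) (hlam : 0 < lam)
    (hfeas : ∃ g : H, (fun i => ⟪g, v i⟫) ∈ C) :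
    ∃ gstar : H,
      (fun i => ⟪gstar, v i⟫) ∈ C ∧
      gstar ∈ Submodule.span ℝ (Set.range v) ∧
      (∀ g : H, (fun i => ⟪g, v i⟫) ∈ C →
        l (fun i => ⟪gstar, v i⟫) + lam * ‖gstar‖ ^ 2
          ≤ l (fun i => ⟪g, v i⟫) + lam * ‖g‖ ^ 2) ∧
      (∀ g : H, (fun i => ⟪g, v i⟫) ∈ C →
        (∀ g' : H, (fun i => ⟪g', v i⟫) ∈ C →
          l (fun i => ⟪g, v i⟫) + lam * ‖g‖ ^ 2
            ≤ l (fun i => ⟪g', v i⟫) + lam * ‖g'‖ ^ 2) →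
        g = gstar) := by
  set T := innerMap v
  set J := fun g => l (T g) + lam * ‖g‖ ^ 2
  set V := Submodule.span ℝ (range v)
  have : FiniteDimensional ℝ V := FiniteDimensional.span_of_finite ℝ (finite_range v)
  have hvV : ∀ i, v i ∈ V := fun i => Submodule.subset_span (mem_range_self i)
  have hJcont : Continuous J := by fun_prop
  have hJstrict : StrictConvexOn ℝ (T ⁻¹' C) J :=
    (hlconv.strictConvexOn_comp_add_mul_norm_sq T.toLinearMap hlam).subset (subset_univ _)
      (hCconv.linear_preimage T.toLinearMap)
  have hPJ : ∀ g, J (V.starProjection g) ≤ J g := fun g => by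
    simp only [J, T, innerMap_starProjection hvV]
    gcongr
    exact V.norm_starProjection_apply_le g
  obtain ⟨gstar, hgS, hgV, hgmin⟩ := exists_mem_submodule_isMinOn_of_tendsto_cobounded hJcont
    (hlconv.tendsto_comp_add_mul_norm_sq_cobounded hlcont T hlam) (hCcl.preimage T.continuous)
    hfeas V V.starProjection V.starProjection_apply_mem
    (fun g hg => by rwa [mem_preimage, innerMap_starProjection hvV]) (fun g _ => hPJ g)
  exact ⟨gstar, hgS, hgV, hgmin, fun g hg hgmin' => hJstrict.eq_of_isMinOn hgmin' hgmin hg hgS⟩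

/-- abstract representer theorem with closed convex
constraints. Let `H` be a real Hilbert space, `v₁, …, v_k ∈ H`, and
`T g := (⟪g, v₁⟫, …, ⟪g, v_k⟫)`. Let `C ⊆ ℝᵏ` be closed and convex with
`{g : T g ∈ C}` nonempty, `ℓ : ℝᵏ → ℝ` continuous and convex, and `λ > 0`.
Then `min_{T g ∈ C} ℓ(T g) + λ ‖g‖²` has a unique solution `g*`, and
`g* ∈ span{v₁, …, v_k}`. -/
theorem representer_theorem {H : Type*} [NormedAddCommGroup H]
    [InnerProductSpace ℝ H] [CompleteSpace H]
    {k : ℕ} (v : Fin k → H)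
    (C : Set (Fin k → ℝ)) (hCcl : IsClosed C) (hCconv : Convex ℝ C)
    (l : (Fin k → ℝ) → ℝ) (hlcont : Continuous l)
    (hlconv : ConvexOn ℝ Set.univ l)
    (lam : ℝ) (hlam : 0 < lam)
    (hfeas : ∃ g : H, (fun i => ⟪g, v i⟫) ∈ C) :
    ∃ gstar : H,
      (fun i => ⟪gstar, v i⟫) ∈ C ∧
      gstar ∈ Submodule.span ℝ (Set.range v) ∧
      (∀ g : H, (fun i => ⟪g, v i⟫) ∈ C →
        l (fun i => ⟪gstar, v i⟫) + lam * ‖gstar‖ ^ 2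
          ≤ l (fun i => ⟪g, v i⟫) + lam * ‖g‖ ^ 2) ∧
      (∀ g : H, (fun i => ⟪g, v i⟫) ∈ C →
        (∀ g' : H, (fun i => ⟪g', v i⟫) ∈ C →
          l (fun i => ⟪g, v i⟫) + lam * ‖g‖ ^ 2
            ≤ l (fun i => ⟪g', v i⟫) + lam * ‖g'‖ ^ 2) →
        g = gstar) :=
  representer_theorem_general v C hCcl hCconv l hlcont hlconv lam hlam hfeas
end

section
/- Let Ω ⊆ ℝⁿ be a convex set containing 0, let f : Ω → ℝⁿ satisfy f(0) = 0 and ‖f(u) − f(v)‖ ≤ L₁‖u − v‖ for all u, v ∈ Ω with L₁ > 0, and let P be a nonzero symmetric real n×n matrix. Let ε ∈ (0,1) and α > 0 satisfy α ≤ ((1 + L₁‖P‖)/(ε + L₁‖P‖))^{1/2} − 1. If z ∈ Ω with z ≠ 0 satisfies zᵀ P f(z) ≤ −‖z‖², then for every x ∈ Ω with ‖x − z‖ < α‖z‖ one has xᵀ P f(x) ≤ −ε‖x‖². -/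
open scoped RealInnerProductSpace

section PairingPerturbation

variable {E F : Type*} [NormedAddCommGroup E] [InnerProductSpace ℝ E] [NormedAddCommGroup F]
  [NormedSpace ℝ F]

theorem inner_apply_sub_inner_apply_le (A : F →L[ℝ] E) (x z : E) (u v : F) :
    ⟪x, A u⟫ - ⟪z, A v⟫ ≤ ‖A‖ * (‖x‖ * ‖u - v‖ + ‖x - z‖ * ‖v‖) := by
  have hsplit : ⟪x, A u⟫ - ⟪z, A v⟫ = ⟪x, A (u - v)⟫ + ⟪x - z, A v⟫ := by
    simp only [map_sub, inner_sub_left, inner_sub_right]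
    ring
  have h₁ : ⟪x, A (u - v)⟫ ≤ ‖x‖ * (‖A‖ * ‖u - v‖) :=
    (real_inner_le_norm _ _).trans (by gcongr; exact A.le_opNorm _)
  have h₂ : ⟪x - z, A v⟫ ≤ ‖x - z‖ * (‖A‖ * ‖v‖) :=
    (real_inner_le_norm _ _).trans (by gcongr; exact A.le_opNorm _)
  rw [hsplit]
  linarith

theorem inner_apply_le_of_norm_sub_le_mul_norm (A : F →L[ℝ] E) {f : E → F} {L α : ℝ} {x z : E}
    (hL : 0 ≤ L) (hα : 0 ≤ α) (hfx : ‖f x - f z‖ ≤ L * ‖x - z‖) (hfz : ‖f z‖ ≤ L * ‖z‖)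
    (hxz : ‖x - z‖ ≤ α * ‖z‖) :
    ⟪x, A (f x)⟫ ≤ ⟪z, A (f z)⟫ + L * ‖A‖ * ((1 + α) ^ 2 - 1) * ‖z‖ ^ 2 := by
  have hx : ‖x‖ ≤ (1 + α) * ‖z‖ := by linarith [norm_le_norm_add_norm_sub' x z]
  have hbound : ‖x‖ * ‖f x - f z‖ + ‖x - z‖ * ‖f z‖
      ≤ (1 + α) * ‖z‖ * (L * (α * ‖z‖)) + α * ‖z‖ * (L * ‖z‖) := by
    gcongr
    exact hfx.trans (by gcongr)
  calc ⟪x, A (f x)⟫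
      ≤ ⟪z, A (f z)⟫ + ‖A‖ * (‖x‖ * ‖f x - f z‖ + ‖x - z‖ * ‖f z‖) := by
        linarith [inner_apply_sub_inner_apply_le A x z (f x) (f z)]
    _ ≤ ⟪z, A (f z)⟫ + ‖A‖ * ((1 + α) * ‖z‖ * (L * (α * ‖z‖)) + α * ‖z‖ * (L * ‖z‖)) := by
        gcongr
    _ = ⟪z, A (f z)⟫ + L * ‖A‖ * ((1 + α) ^ 2 - 1) * ‖z‖ ^ 2 := by ring

end PairingPerturbation

theorem mul_one_add_sq_le_of_le_sqrt_div_sub_one {ε K α : ℝ} (hε : 0 < ε) (hK : 0 ≤ K)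
    (hα : 0 ≤ α) (h : α ≤ √((1 + K) / (ε + K)) - 1) : (ε + K) * (1 + α) ^ 2 ≤ 1 + K := by
  have hsq : (1 + α) ^ 2 ≤ (1 + K) / (ε + K) :=
    (Real.le_sqrt' (by linarith)).mp (by linarith)
  rwa [le_div_iff₀ (by linarith), mul_comm] at hsq

theorem away_from_origin_case_general {n : ℕ}
    (Ω : Set (EuclideanSpace ℝ (Fin n)))
    (h0 : (0 : EuclideanSpace ℝ (Fin n)) ∈ Ω)
    (f : EuclideanSpace ℝ (Fin n) → EuclideanSpace ℝ (Fin n))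
    (hf0 : f 0 = 0)
    (L₁ : ℝ) (hL₁ : 0 < L₁)
    (hlip : ∀ u ∈ Ω, ∀ v ∈ Ω, ‖f u - f v‖ ≤ L₁ * ‖u - v‖)
    (P : Matrix (Fin n) (Fin n) ℝ)
    (ε α : ℝ) (hε0 : 0 < ε) (hα0 : 0 < α)
    (hα : α ≤ Real.sqrt ((1 + L₁ * opNorm P) / (ε + L₁ * opNorm P)) - 1)
    (z : EuclideanSpace ℝ (Fin n)) (hz : z ∈ Ω)
    (hzP : quadF P z (f z) ≤ -‖z‖ ^ 2) :
    ∀ x ∈ Ω, ‖x - z‖ < α * ‖z‖ → quadF P x (f x) ≤ -ε * ‖x‖ ^ 2 := by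
  intro x hx hxz
  have hK : 0 ≤ L₁ * opNorm P := mul_nonneg hL₁.le (norm_nonneg _)
  have hfz : ‖f z‖ ≤ L₁ * ‖z‖ := by simpa [hf0] using hlip z hz 0 h0
  have hgrowth : quadF P x (f x) ≤ quadF P z (f z) + L₁ * opNorm P * ((1 + α) ^ 2 - 1) * ‖z‖ ^ 2 :=
    inner_apply_le_of_norm_sub_le_mul_norm (Matrix.toEuclideanCLM (𝕜 := ℝ) P) hL₁.le hα0.le
      (hlip x hx z hz) hfz hxz.le
  have hcoef := mul_one_add_sq_le_of_le_sqrt_div_sub_one hε0 hK hα0.le hα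
  have hx : ‖x‖ ≤ (1 + α) * ‖z‖ := by linarith [norm_le_norm_add_norm_sub' x z]
  calc quadF P x (f x)
      ≤ ((L₁ * opNorm P) * (1 + α) ^ 2 - (1 + L₁ * opNorm P)) * ‖z‖ ^ 2 := by linarith
    _ ≤ -ε * ((1 + α) * ‖z‖) ^ 2 := by nlinarith [sq_nonneg ‖z‖]
    _ ≤ -ε * ‖x‖ ^ 2 := by
        rw [neg_mul, neg_mul, neg_le_neg_iff]
        gcongr

/-- away-from-origin case of the grid-sufficiency theorem.
Let `Ω ⊆ ℝⁿ` be convex with `0 ∈ Ω`, `f : Ω → ℝⁿ` with `f 0 = 0` and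
`L₁`-Lipschitz on `Ω` (`L₁ > 0`), and let `P ≠ 0` be symmetric. Let
`ε ∈ (0,1)` and `α > 0` satisfy `α ≤ ((1 + L₁‖P‖)/(ε + L₁‖P‖))^{1/2} - 1`.
If `z ∈ Ω`, `z ≠ 0` satisfies `zᵀ P f(z) ≤ -‖z‖²`, then every `x ∈ Ω` with
`‖x - z‖ < α ‖z‖` satisfies `xᵀ P f(x) ≤ -ε ‖x‖²`. -/
theorem away_from_origin_case {n : ℕ}
    (Ω : Set (EuclideanSpace ℝ (Fin n)))
    (hconv : Convex ℝ Ω) (h0 : (0 : EuclideanSpace ℝ (Fin n)) ∈ Ω)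
    (f : EuclideanSpace ℝ (Fin n) → EuclideanSpace ℝ (Fin n))
    (hf0 : f 0 = 0)
    (L₁ : ℝ) (hL₁ : 0 < L₁)
    (hlip : ∀ u ∈ Ω, ∀ v ∈ Ω, ‖f u - f v‖ ≤ L₁ * ‖u - v‖)
    (P : Matrix (Fin n) (Fin n) ℝ) (hP : P.IsSymm) (hP0 : P ≠ 0)
    (ε α : ℝ) (hε0 : 0 < ε) (hε1 : ε < 1) (hα0 : 0 < α)
    (hα : α ≤ Real.sqrt ((1 + L₁ * opNorm P) / (ε + L₁ * opNorm P)) - 1)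
    (z : EuclideanSpace ℝ (Fin n)) (hz : z ∈ Ω) (hz0 : z ≠ 0)
    (hzP : quadF P z (f z) ≤ -‖z‖ ^ 2) :
    ∀ x ∈ Ω, ‖x - z‖ < α * ‖z‖ → quadF P x (f x) ≤ -ε * ‖x‖ ^ 2 :=
  away_from_origin_case_general Ω h0 f hf0 L₁ hL₁ hlip P ε α hε0 hα0 hα z hz hzP
end
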